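/- arXiv:2509.02166 — 2 statements merged into one kernel-verified Lean document; each statement's English description precedes it below -/
import Mathlib

section
/- Let d > 0, x̃₁ ≤ … ≤ x̃_M real with x̃_M - x̃₁ < d/√3, and L(x) = ∑_m 1/((x - x̃_m)² + d²). Then L is strictly concave on the interval [x̃₁, x̃_M]. -/
/-!
Each summand is a Lorentzian profile `1 / ((x - c)² + d²)`, whose second derivative
`2 (3 (x - c)² - d²) / ((x - c)² + d²)³` is negative exactly when `|x - c| < d / √3`.
Every centre lies in `[x̃₁, x̃_M]`, so the spread bound puts the whole interval inside the
concavity window of every summand, and a nonempty sum of strictly concave functions is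
strictly concave.
-/

open Finset

theorem StrictConcaveOn.finset_sum {𝕜 E β ι : Type*} [Semiring 𝕜] [PartialOrder 𝕜]
    [AddCommMonoid E] [AddCommMonoid β] [PartialOrder β] [IsOrderedCancelAddMonoid β]
    [SMul 𝕜 E] [DistribMulAction 𝕜 β] {s : Set E} {t : Finset ι} {f : ι → E → β}
    (ht : t.Nonempty) (hf : ∀ i ∈ t, StrictConcaveOn 𝕜 s (f i)) :
    StrictConcaveOn 𝕜 s fun x ↦ ∑ i ∈ t, f i x := by
  induction ht using Finset.Nonempty.cons_induction with
  | singleton i => simpa using hf i (mem_singleton_self i)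
  | cons i t _ _ ih =>
    simp only [sum_cons]
    exact (hf i (mem_cons_self i t)).add (ih fun j hj ↦ hf j (mem_cons_of_mem hj))

noncomputable def lorentzian (c d x : ℝ) : ℝ := 1 / ((x - c) ^ 2 + d ^ 2)

section Lorentzian

variable {c d : ℝ}

theorem hasDerivAt_sq_sub_add_sq (x : ℝ) :
    HasDerivAt (fun y ↦ (y - c) ^ 2 + d ^ 2) (2 * (x - c)) x := by
  simpa using (((hasDerivAt_id x).sub_const c).fun_pow 2).add_const (d ^ 2)

theorem hasDerivAt_lorentzian (hd : d ≠ 0) (x : ℝ) :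
    HasDerivAt (lorentzian c d) (-(2 * (x - c)) / ((x - c) ^ 2 + d ^ 2) ^ 2) x := by
  refine ((hasDerivAt_const x (1 : ℝ)).fun_div (hasDerivAt_sq_sub_add_sq x)
    (by positivity)).congr_deriv ?_
  ring

theorem hasDerivAt_deriv_lorentzian (hd : d ≠ 0) (x : ℝ) :
    HasDerivAt (deriv (lorentzian c d))
      (2 * (3 * (x - c) ^ 2 - d ^ 2) / ((x - c) ^ 2 + d ^ 2) ^ 3) x := by
  have hq : (x - c) ^ 2 + d ^ 2 ≠ 0 := by positivity
  have hnum : HasDerivAt (fun y ↦ -(2 * (y - c))) (-(2 * 1)) x :=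
    (((hasDerivAt_id x).sub_const c).const_mul 2).fun_neg
  rw [show deriv (lorentzian c d) = _ from funext fun y ↦ (hasDerivAt_lorentzian hd y).deriv]
  refine (hnum.fun_div ((hasDerivAt_sq_sub_add_sq x).fun_pow 2)
    (pow_ne_zero 2 hq)).congr_deriv ?_
  field_simp
  ring

theorem strictConcaveOn_lorentzian (hd : 0 < d) :
    StrictConcaveOn ℝ (Set.Ioo (c - d / √3) (c + d / √3)) (lorentzian c d) := by
  refine strictConcaveOn_of_deriv2_neg (convex_Ioo _ _)
    (fun x _ ↦ (hasDerivAt_lorentzian hd.ne' x).continuousAt.continuousWithinAt) ?_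
  intro x hx
  rw [interior_Ioo] at hx
  have hx' : (x - c) ^ 2 < (d / √3) ^ 2 := sq_lt_sq' (by linarith [hx.1]) (by linarith [hx.2])
  rw [div_pow, Real.sq_sqrt (by norm_num)] at hx'
  rw [Function.iterate_succ_apply, Function.iterate_one,
    (hasDerivAt_deriv_lorentzian hd.ne' x).deriv]
  exact div_neg_of_neg_of_pos (by linarith) (by positivity)

end Lorentzian

theorem stmt_5 (d : ℝ) (hd : 0 < d) (M : ℕ) (hM : 1 ≤ M)
    (xt : Fin M → ℝ) (hmono : Monotone xt)
    (hspread : xt ⟨M - 1, Nat.sub_lt hM one_pos⟩ - xt ⟨0, hM⟩ < d / Real.sqrt 3)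
    (L : ℝ → ℝ) (hL : ∀ x, L x = ∑ m, 1 / ((x - xt m) ^ 2 + d ^ 2)) :
    StrictConcaveOn ℝ (Set.Icc (xt ⟨0, hM⟩) (xt ⟨M - 1, Nat.sub_lt hM one_pos⟩)) L := by
  obtain rfl : L = fun x ↦ ∑ m, lorentzian (xt m) d x := funext hL
  refine StrictConcaveOn.finset_sum ⟨⟨0, hM⟩, mem_univ _⟩ fun m _ ↦
    (strictConcaveOn_lorentzian hd).subset ?_ (convex_Icc _ _)
  have hfirst : xt ⟨0, hM⟩ ≤ xt m := hmono (Nat.zero_le _)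
  have hlast : xt m ≤ xt ⟨M - 1, Nat.sub_lt hM one_pos⟩ := hmono (Nat.le_sub_one_of_lt m.2)
  rintro x ⟨hxa, hxb⟩
  constructor <;> linarith
end

section
/- Let d > 0 and suppose x̃₁, …, x̃_M are symmetric about c with max_m x̃_m - min_m x̃_m < d/√3. Then c is the unique global maximizer of L(x) = ∑_m 1/((x - x̃_m)² + d²). -/
/-!
Pair each point x̃ₘ with its mirror image x̃_{rev m} = 2c - x̃ₘ. With f(u) = 1/(u² + d²),
s = c - x̃ₘ and t = x - c, the pair contributes f(t + s) + f(t - s) to L(x) and 2f(s) to L(c).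
The difference 2f(s) - f(t + s) - f(t - s) has the sign of t²(t² + d² - 3s²), which is positive
for t ≠ 0 because 2|s| = |x̃_{rev m} - x̃ₘ| is at most the spread, which is less than d/√3.
-/

open Finset

theorem one_div_add_one_div_lt_two_mul_one_div {d s t : ℝ} (ht : t ≠ 0)
    (hs : 3 * s ^ 2 < d ^ 2) :
    1 / ((t + s) ^ 2 + d ^ 2) + 1 / ((t - s) ^ 2 + d ^ 2) < 2 * (1 / (s ^ 2 + d ^ 2)) := by
  have hd : 0 < d ^ 2 := by nlinarith [sq_nonneg s]
  have key : 2 * (1 / (s ^ 2 + d ^ 2)) - (1 / ((t + s) ^ 2 + d ^ 2) + 1 / ((t - s) ^ 2 + d ^ 2))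
      = 2 * t ^ 2 * (t ^ 2 + (d ^ 2 - 3 * s ^ 2)) /
        (((t + s) ^ 2 + d ^ 2) * ((t - s) ^ 2 + d ^ 2) * (s ^ 2 + d ^ 2)) := by
    field_simp
    ring
  have : 0 < d ^ 2 - 3 * s ^ 2 := sub_pos.mpr hs
  rw [← sub_pos, key]
  positivity

theorem Fin.sum_lt_sum_of_add_rev_lt {α : Type*} [Semiring α] [LinearOrder α]
    [IsStrictOrderedRing α] {M : ℕ} (hM : 0 < M) {f g : Fin M → α}
    (h : ∀ m, f m + f m.rev < 2 * g m) : ∑ m, f m < ∑ m, g m := by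
  have : Nonempty (Fin M) := ⟨⟨0, hM⟩⟩
  have hsum : ∑ m, (f m + f m.rev) = 2 * ∑ m, f m := by
    rw [sum_add_distrib, two_mul]
    exact congrArg _ (Equiv.sum_comp Fin.revPerm f)
  refine lt_of_mul_lt_mul_left ?_ zero_le_two
  rw [← hsum, mul_sum]
  exact sum_lt_sum_of_nonempty univ_nonempty fun m _ => h m

theorem Monotone.sub_le_last_sub_first {α : Type*} [AddCommGroup α] [LinearOrder α]
    [IsOrderedAddMonoid α] {M : ℕ} (hM : 1 ≤ M) {f : Fin M → α} (hf : Monotone f)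
    (i j : Fin M) :
    f j - f i ≤ f ⟨M - 1, Nat.sub_lt hM one_pos⟩ - f ⟨0, hM⟩ :=
  sub_le_sub (hf (Fin.le_def.mpr (Nat.le_sub_one_of_lt j.isLt)))
    (hf (Fin.mk_le_of_le_val (Nat.zero_le _)))

theorem three_mul_sq_lt_of_abs_lt_div_sqrt_three {u d : ℝ} (h : |u| < d / √3) :
    3 * u ^ 2 < d ^ 2 := by
  have : u ^ 2 < (d / √3) ^ 2 := sq_lt_sq' (abs_lt.mp h).1 (abs_lt.mp h).2
  rw [div_pow, Real.sq_sqrt zero_le_three, lt_div_iff₀ zero_lt_three] at this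
  linarith

theorem stmt_9_general (d : ℝ) (M : ℕ) (hM : 1 ≤ M)
    (xt : Fin M → ℝ) (hmono : Monotone xt) (c : ℝ)
    (hsym : ∀ i, xt (Fin.rev i) = 2 * c - xt i)
    (hspread : xt ⟨M - 1, Nat.sub_lt hM one_pos⟩ - xt ⟨0, hM⟩ < d / Real.sqrt 3)
    (L : ℝ → ℝ) (hL : ∀ x, L x = ∑ m, 1 / ((x - xt m) ^ 2 + d ^ 2)) :
    ∀ x ≠ c, L x < L c := by
  intro x hx
  rw [hL, hL]
  refine Fin.sum_lt_sum_of_add_rev_lt hM fun m => ?_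
  have hs : 3 * (2 * (c - xt m)) ^ 2 < d ^ 2 := by
    refine three_mul_sq_lt_of_abs_lt_div_sqrt_three (lt_of_le_of_lt ?_ hspread)
    rw [abs_le]
    constructor <;> linarith [hsym m, hmono.sub_le_last_sub_first hM m m.rev,
      hmono.sub_le_last_sub_first hM m.rev m]
  rw [hsym m, show x - (2 * c - xt m) = x - c - (c - xt m) by ring,
    show x - xt m = x - c + (c - xt m) by ring]
  exact one_div_add_one_div_lt_two_mul_one_div (sub_ne_zero.mpr hx) (by nlinarith)

theorem stmt_9 (d : ℝ) (hd : 0 < d) (M : ℕ) (hM : 1 ≤ M)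
    (xt : Fin M → ℝ) (hmono : Monotone xt) (c : ℝ)
    (hsym : ∀ i, xt (Fin.rev i) = 2 * c - xt i)
    (hspread : xt ⟨M - 1, Nat.sub_lt hM one_pos⟩ - xt ⟨0, hM⟩ < d / Real.sqrt 3)
    (L : ℝ → ℝ) (hL : ∀ x, L x = ∑ m, 1 / ((x - xt m) ^ 2 + d ^ 2)) :
    ∀ x ≠ c, L x < L c :=
  stmt_9_general d M hM xt hmono c hsym hspread L hL
end
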